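/- There exists an absolute constant K > 0 such that for every positive integer c and all integers x₁, x₂, one has |G(x₁, x₂; c)| ≤ K c^{-3/2}, where G(x₁, x₂; c) = c^{-3} ∑_{a=0}^{c-1} ∑_{b=0}^{c-1} S(a, b²; c) e((a x₁ + b x₂)/c). -/

import Mathlib

open Complex

/-- `e(x) = exp(2πix)`. -/
noncomputable def eAdd (x : ℝ) : ℂ := Complex.exp (2 * Real.pi * Complex.I * x)

/-- The Kloosterman sum `S(a, b; c) = ∑_{d mod c, (d,c)=1} e((ad + b d̄)/c)`,
where `d̄` is the inverse of `d` modulo `c` (computed in `ZMod c`). -/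
noncomputable def kloos (a b : ℤ) (c : ℕ) : ℂ :=
  ∑ d ∈ (Finset.range c).filter (fun d => Nat.gcd d c = 1),
    eAdd (((a * (d : ℤ) + b * ((((d : ZMod c)⁻¹).val : ℤ)) : ℤ) : ℝ) / c)

/-- The arithmetic part `G(x₁, x₂; c) = c^{-3} ∑_{a,b mod c} S(a, b²; c) e((a x₁ + b x₂)/c)`. -/
noncomputable def Garith (x₁ x₂ : ℤ) (c : ℕ) : ℂ :=
  ((c : ℂ) ^ 3)⁻¹ *
    ∑ a ∈ Finset.range c, ∑ b ∈ Finset.range c,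
      kloos (a : ℤ) ((b : ℤ) ^ 2) c * eAdd ((((a : ℤ) * x₁ + (b : ℤ) * x₂ : ℤ) : ℝ) / c)

/-!
Opening the Kloosterman sum as a sum over `d` coprime to `c` and summing over `a` first, the
`a`-sum is `c` or `0` according as `d ≡ -x₁ (mod c)` or not, so at most one `d` survives and `G` is
`c⁻²` times a quadratic Gauss sum `∑_b e((d̄ b² + x₂ b)/c)`. Substituting `b = b' + h` in its
square modulus and summing over `b'` leaves `c` times a sum over the `h` with `2h ≡ 0 (mod c)`, of
which there are at most two; hence the Gauss sum has modulus at most `√(2c)`.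
-/

open Finset

namespace AddChar

variable {R : Type*} [CommRing R] [Fintype R] [DecidableEq R] {ψ : AddChar R ℂ}

lemma sum_quadratic_mul_conj (hψ : ψ.IsPrimitive) (u x : R) :
    (∑ b, ψ (u * b ^ 2 + x * b)) * starRingEnd ℂ (∑ b, ψ (u * b ^ 2 + x * b)) =
      Fintype.card R * ∑ h ∈ univ.filter (fun h => 2 * u * h = 0), ψ (u * h ^ 2 + x * h) := by
  calc (∑ b, ψ (u * b ^ 2 + x * b)) * starRingEnd ℂ (∑ b, ψ (u * b ^ 2 + x * b))
      = ∑ b', ∑ h, ψ (b' * (2 * u * h)) * ψ (u * h ^ 2 + x * h) := by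
        rw [map_sum, sum_mul_sum, sum_comm]
        refine sum_congr rfl fun b' _ => ?_
        refine (Fintype.sum_equiv (Equiv.addLeft b') _ _ fun h => ?_).symm
        simp only [Equiv.coe_addLeft, ← map_neg_eq_conj, ← map_add_eq_mul]
        congr 1
        ring
    _ = ∑ h, ((if 2 * u * h = 0 then Fintype.card R else 0 : ℕ) : ℂ) * ψ (u * h ^ 2 + x * h) := by
        rw [sum_comm]
        simp only [← sum_mul, sum_mulShift _ hψ]
    _ = _ := by
        rw [mul_sum, sum_filter]
        refine sum_congr rfl fun h _ => ?_
        split_ifs <;> simp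

lemma norm_sum_quadratic_sq_le (hψ : ψ.IsPrimitive) (u x : R) :
    ‖∑ b, ψ (u * b ^ 2 + x * b)‖ ^ 2 ≤
      Fintype.card R * #(univ.filter (fun h => 2 * u * h = 0)) := by
  rw [sq]
  nth_rw 2 [← RCLike.norm_conj]
  rw [← norm_mul, sum_quadratic_mul_conj hψ, norm_mul, Complex.norm_natCast]
  gcongr
  refine (norm_sum_le _ _).trans_eq ?_
  simp

end AddChar

namespace ZMod

variable {c : ℕ} [NeZero c]

lemma sum_range_natCast {M : Type*} [AddCommMonoid M] (f : ZMod c → M) :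
    ∑ a ∈ range c, f a = ∑ a, f a :=
  sum_nbij' (fun a => (a : ZMod c)) (fun y => y.val) (by simp) (by simp [val_lt])
    (fun a ha => val_cast_of_lt (mem_range.mp ha)) (fun y _ => natCast_zmod_val y) (fun _ _ => rfl)

lemma card_filter_two_mul_eq_zero_le : #(univ.filter (fun h : ZMod c => 2 * h = 0)) ≤ 2 := by
  have hsub : univ.filter (fun h : ZMod c => 2 * h = 0) ⊆ {0, ((c / 2 : ℕ) : ZMod c)} := by
    intro h hh
    have hdvd : c ∣ 2 * h.val := by
      rw [← natCast_eq_zero_iff]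
      simpa using (mem_filter.mp hh).2
    obtain ⟨k, hk⟩ := hdvd
    have hk2 : k < 2 := by
      by_contra! hk2
      have := val_lt h
      nlinarith
    rw [← natCast_zmod_val h, mem_insert, mem_singleton]
    interval_cases k
    · left; simp [show h.val = 0 by omega]
    · right; rw [show h.val = c / 2 by omega]
  exact (card_le_card hsub).trans (card_insert_le _ _)

lemma norm_sum_stdAddChar_quadratic_le {u : ZMod c} (hu : IsUnit u) (x : ZMod c) :
    ‖∑ b, stdAddChar (u * b ^ 2 + x * b)‖ ≤ √(2 * c) := by
  have htwo :
      univ.filter (fun h : ZMod c => 2 * u * h = 0) = univ.filter (fun h => 2 * h = 0) := by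
    ext h
    simp [mul_right_comm _ u, hu.mul_left_eq_zero]
  refine Real.le_sqrt_of_sq_le
    ((AddChar.norm_sum_quadratic_sq_le (isPrimitive_stdAddChar c) u x).trans ?_)
  rw [htwo, card, mul_comm]
  gcongr
  exact_mod_cast card_filter_two_mul_eq_zero_le

end ZMod

section Kloosterman

open ZMod

variable {c : ℕ} [NeZero c]

lemma eAdd_intCast_div (n : ℤ) : eAdd ((n : ℝ) / c) = stdAddChar (n : ZMod c) := by
  rw [stdAddChar_coe, eAdd]
  push_cast
  ring_nf

lemma kloos_eq_sum_stdAddChar (a b : ℤ) :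
    kloos a b c = ∑ d ∈ (range c).filter (fun d => d.gcd c = 1),
      stdAddChar (a * d + b * (d : ZMod c)⁻¹ : ZMod c) := by
  refine sum_congr rfl fun d _ => ?_
  rw [eAdd_intCast_div]
  push_cast [natCast_zmod_val]
  rfl

lemma Garith_eq (x₁ x₂ : ℤ) :
    Garith x₁ x₂ c = ((c : ℂ) ^ 3)⁻¹ * ∑ d ∈ (range c).filter (fun d => d.gcd c = 1),
      (∑ a : ZMod c, stdAddChar (a * (d + x₁ : ZMod c))) *
        ∑ b : ZMod c, stdAddChar ((d : ZMod c)⁻¹ * b ^ 2 + x₂ * b : ZMod c) := by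
  rw [Garith]
  congr 1
  calc _ = ∑ a ∈ range c, ∑ b ∈ range c, ∑ d ∈ (range c).filter (fun d => d.gcd c = 1),
        stdAddChar (a * (d + x₁) : ZMod c) *
          stdAddChar ((d : ZMod c)⁻¹ * b ^ 2 + x₂ * b : ZMod c) := by
        refine sum_congr rfl fun a _ => sum_congr rfl fun b _ => ?_
        rw [kloos_eq_sum_stdAddChar, eAdd_intCast_div, sum_mul]
        refine sum_congr rfl fun d _ => ?_
        rw [← AddChar.map_add_eq_mul, ← AddChar.map_add_eq_mul]
        push_cast
        ring_nf
    _ = _ := by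
        simp only [sum_comm (s := range c) (t := (range c).filter _)]
        refine sum_congr rfl fun d _ => ?_
        rw [← sum_range_natCast (fun a : ZMod c => stdAddChar (a * (d + x₁ : ZMod c))),
          ← sum_range_natCast
            (fun b : ZMod c => stdAddChar ((d : ZMod c)⁻¹ * b ^ 2 + x₂ * b : ZMod c)), sum_mul_sum]

lemma sum_norm_sum_stdAddChar_mul_add (x : ZMod c) :
    ∑ y : ZMod c, ‖∑ a : ZMod c, stdAddChar (a * (y + x))‖ = c := by
  simp only [AddChar.sum_mulShift _ (isPrimitive_stdAddChar c), add_eq_zero_iff_eq_neg,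
    ZMod.card, apply_ite, Complex.norm_natCast, CharP.cast_eq_zero, norm_zero, Fintype.sum_ite_eq']

lemma norm_Garith_le (x₁ x₂ : ℤ) : ‖Garith x₁ x₂ c‖ ≤ ((c : ℝ) ^ 3)⁻¹ * (c * √(2 * c)) := by
  rw [Garith_eq, norm_mul, norm_inv, norm_pow, Complex.norm_natCast]
  refine mul_le_mul_of_nonneg_left ?_ (by positivity)
  calc _ ≤ ∑ d ∈ (range c).filter (fun d => d.gcd c = 1),
        ‖∑ a : ZMod c, stdAddChar (a * (d + x₁ : ZMod c))‖ * √(2 * c) := by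
        refine (norm_sum_le _ _).trans (sum_le_sum fun d hd => ?_)
        have hu : IsUnit (d : ZMod c) := (isUnit_iff_coprime d c).mpr (mem_filter.mp hd).2
        rw [norm_mul]
        gcongr
        exact norm_sum_stdAddChar_quadratic_le
          (IsUnit.of_mul_eq_one_right _ (mul_inv_of_unit _ hu)) _
    _ ≤ ∑ d ∈ range c, ‖∑ a : ZMod c, stdAddChar (a * (d + x₁ : ZMod c))‖ * √(2 * c) :=
        sum_le_sum_of_subset_of_nonneg (filter_subset _ _) fun _ _ _ => by positivity
    _ = c * √(2 * c) := by
        rw [sum_range_natCast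
            (fun y : ZMod c => ‖∑ a : ZMod c, stdAddChar (a * (y + x₁ : ZMod c))‖ * √(2 * c)),
          ← sum_mul, sum_norm_sum_stdAddChar_mul_add]

end Kloosterman

/-- Uniform bound for the arithmetic part: there is an absolute `K > 0` with
`|G(x₁, x₂; c)| ≤ K c^{-3/2}` for all positive integers `c` and all integers `x₁, x₂`. -/
theorem Garith_bound :
    ∃ K : ℝ, 0 < K ∧ ∀ c : ℕ, 0 < c → ∀ x₁ x₂ : ℤ,
      ‖Garith x₁ x₂ c‖ ≤ K * (c : ℝ) ^ (-(3 / 2 : ℝ)) := by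
  refine ⟨√2, by positivity, fun c hc x₁ x₂ => ?_⟩
  have : NeZero c := ⟨hc.ne'⟩
  have hc' : (0 : ℝ) < c := by exact_mod_cast hc
  refine (norm_Garith_le x₁ x₂).trans_eq ?_
  rw [show -(3 / 2 : ℝ) = -3 + 1 + 1 / 2 by norm_num, Real.rpow_add hc', Real.rpow_add hc',
    Real.rpow_neg hc'.le, Real.rpow_one, ← Real.sqrt_eq_rpow, Real.sqrt_mul zero_le_two]
  norm_cast
  ring
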